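/- (The L¹ metric on rational step functions) The function d¹ f g := ‖map2 (·−·) f g‖₁ on S ℚ satisfies the axioms of a metric with respect to the lifted equality ≍: for all f, g, h : S ℚ, (i) 0 ≤ d¹ f g; (ii) d¹ f f = 0; (iii) d¹ f g = d¹ g f; (iv) d¹ f h ≤ d¹ f g + d¹ g h; and (v) d¹ f g = 0 → f ≍ g. -/

import Mathlib

set_option linter.unusedVariables false

/-- Rationals strictly between 0 and 1. -/
abbrev OO : Type := {q : ℚ // 0 < q ∧ q < 1}

/-- Rational step functions on the unit interval with values in `X`. -/
inductive S (X : Type) : Type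
  | const : X → S X
  | glue : OO → S X → S X → S X

namespace S

def divO (a o : OO) (h : a.1 < o.1) : OO :=
  ⟨a.1 / o.1, div_pos a.2.1 o.2.1, (div_lt_one o.2.1).2 h⟩

def subO (a o : OO) (h : o.1 < a.1) : OO :=
  ⟨(a.1 - o.1) / (1 - o.1),
    div_pos (by linarith) (by linarith [o.2.2]),
    (div_lt_one (by linarith [o.2.2])).2 (by linarith [a.2.2])⟩

/-- Left split: the part of the step function on `[0,a]`, rescaled to `[0,1]`. -/
def splitL {X : Type} : S X → OO → S X
  | const x, _ => const x
  | glue o f g, a =>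
      if h : a.1 < o.1 then splitL f (divO a o h)
      else if h' : o.1 < a.1 then glue (divO o a h') f (splitL g (subO a o h'))
      else f

/-- Right split: the part of the step function on `[a,1]`, rescaled to `[0,1]`. -/
def splitR {X : Type} : S X → OO → S X
  | const x, _ => const x
  | glue o f g, a =>
      if h : a.1 < o.1 then glue (subO o a h) (splitR f (divO a o h)) g
      else if h' : o.1 < a.1 then splitR g (subO a o h')
      else g

/-- The catamorphism (fold) for step functions. -/
def fold {X Y : Type} (φ : X → Y) (ψ : OO → Y → Y → Y) : S X → Y
  | const x => φ x
  | glue o f g => ψ o (fold φ ψ f) (fold φ ψ g)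

/-- `map` for step functions. -/
def mapS {X Y : Type} (f : X → Y) : S X → S Y
  | const x => const (f x)
  | glue o l r => glue o (mapS f l) (mapS f r)

/-- The applicative `ap` (pointwise application) for step functions. -/
def ap {X Y : Type} : S (X → Y) → S X → S Y
  | const f, x => mapS f x
  | glue o fl fr, x => glue o (ap fl (splitL x o)) (ap fr (splitR x o))

/-- Binary map. -/
def map2 {X Y Z : Type} (f : X → Y → Z) (a : S X) (b : S Y) : S Z :=
  ap (mapS f a) b

/-- `fold⋆`: a step function of propositions holds everywhere. -/
def foldStar : S Prop → Prop := fold id (fun _ p q => p ∧ q)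

/-- Lifting of a relation to step functions: it holds pointwise everywhere. -/
def liftRel {X Y : Type} (R : X → Y → Prop) (f : S X) (g : S Y) : Prop :=
  foldStar (map2 R f g)

/-- The equivalence `≍` on step functions: the lifting of equality. -/
def equivS {X : Type} (f g : S X) : Prop := liftRel Eq f g

def foldSup : S ℚ → ℚ := fold id (fun _ x y => max x y)

def foldAffine : S ℚ → ℚ := fold id (fun o x y => o.1 * x + (1 - o.1) * y)

def normInf (f : S ℚ) : ℚ := foldSup (mapS (fun q => |q|) f)

def normOne (f : S ℚ) : ℚ := foldAffine (mapS (fun q => |q|) f)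

def dInf (f g : S ℚ) : ℚ := normInf (map2 (· - ·) f g)

def dOne (f g : S ℚ) : ℚ := normOne (map2 (· - ·) f g)

end S

open S

/-!
Read a step function as a function on `[0, 1)` through `S.eval`. Splitting, `ap` and hence
`map2` act pointwise on this reading, and `foldAffine` behaves as the integral: it is invariant
under splitting at any point, monotone and additive, and it vanishes on a nonnegative function
only if that function vanishes everywhere. Each metric axiom is then the integral of the
corresponding pointwise property of `|x - y|`.
-/

namespace S

open Set

variable {X Y : Type}

/-- The value at `t ∈ [0, 1)`; at a breakpoint the right piece is taken. -/
def eval : S X → ℚ → X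
  | const x, _ => x
  | glue o f g, t => if t < o.1 then eval f (t / o.1) else eval g ((t - o.1) / (1 - o.1))

lemma mul_mem_Ico_zero_one (o : OO) {s : ℚ} (hs : s ∈ Ico (0 : ℚ) 1) :
    o.1 * s ∈ Ico (0 : ℚ) 1 := by
  obtain ⟨ho₀, ho₁⟩ := o.2
  constructor <;> nlinarith [hs.1, hs.2]

lemma add_mul_mem_Ico_zero_one (o : OO) {s : ℚ} (hs : s ∈ Ico (0 : ℚ) 1) :
    o.1 + (1 - o.1) * s ∈ Ico (0 : ℚ) 1 := by
  obtain ⟨ho₀, ho₁⟩ := o.2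
  constructor <;> nlinarith [hs.1, hs.2]

lemma div_mem_Ico_zero_one (o : OO) {t : ℚ} (ht : t ∈ Ico (0 : ℚ) 1) (hto : t < o.1) :
    t / o.1 ∈ Ico (0 : ℚ) 1 :=
  ⟨div_nonneg ht.1 o.2.1.le, (div_lt_one o.2.1).2 hto⟩

lemma sub_div_mem_Ico_zero_one (o : OO) {t : ℚ} (ht : t ∈ Ico (0 : ℚ) 1) (hot : o.1 ≤ t) :
    (t - o.1) / (1 - o.1) ∈ Ico (0 : ℚ) 1 := by
  have h : 0 < 1 - o.1 := sub_pos.2 o.2.2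
  exact ⟨div_nonneg (sub_nonneg.2 hot) h.le, (div_lt_one h).2 (by linarith [ht.2])⟩

lemma eval_glue_of_lt {o : OO} {t : ℚ} (f g : S X) (h : t < o.1) :
    eval (glue o f g) t = eval f (t / o.1) := if_pos h

lemma eval_glue_of_le {o : OO} {t : ℚ} (f g : S X) (h : o.1 ≤ t) :
    eval (glue o f g) t = eval g ((t - o.1) / (1 - o.1)) := if_neg (not_lt.2 h)

lemma eval_glue_mul (o : OO) (f g : S X) {s : ℚ} (hs : s ∈ Ico (0 : ℚ) 1) :
    eval (glue o f g) (o.1 * s) = eval f s := by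
  obtain ⟨ho₀, ho₁⟩ := o.2
  rw [eval_glue_of_lt f g (by nlinarith [hs.2]), mul_div_cancel_left₀ _ ho₀.ne']

lemma eval_glue_add_mul (o : OO) (f g : S X) {s : ℚ} (hs : s ∈ Ico (0 : ℚ) 1) :
    eval (glue o f g) (o.1 + (1 - o.1) * s) = eval g s := by
  have h : 0 < 1 - o.1 := sub_pos.2 o.2.2
  rw [eval_glue_of_le f g (by nlinarith [hs.1]), add_sub_cancel_left,
    mul_div_cancel_left₀ _ h.ne']

@[simp] lemma eval_mapS (k : X → Y) (x : S X) (t : ℚ) : eval (mapS k x) t = k (eval x t) := by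
  induction x generalizing t with
  | const x => rfl
  | glue o f g ihf ihg => simp only [mapS, eval, apply_ite k, ihf, ihg]

lemma eval_splitL (x : S X) (a : OO) {t : ℚ} (ht : t ∈ Ico (0 : ℚ) 1) :
    eval (splitL x a) t = eval x (a.1 * t) := by
  induction x generalizing a t with
  | const x => rfl
  | glue o f g ihf ihg =>
    obtain ⟨ha₀, ha₁⟩ := a.2
    obtain ⟨ho₀, ho₁⟩ := o.2
    have hat : a.1 * t < a.1 := by nlinarith [ht.2]
    rcases lt_trichotomy a.1 o.1 with h | h | h
    · rw [splitL, dif_pos h, ihf _ ht, eval_glue_of_lt f g (hat.trans h)]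
      congr 1
      simp only [divO]
      field_simp
    · rw [splitL, dif_neg h.not_lt, dif_neg h.not_gt, h, eval_glue_mul o f g ht]
    · rw [splitL, dif_neg (asymm h), dif_pos h]
      have hoa : (divO o a h).1 = o.1 / a.1 := rfl
      by_cases hto : t < (divO o a h).1
      · have hato : a.1 * t < o.1 := by rw [hoa, lt_div_iff₀ ha₀] at hto; linarith
        rw [eval_glue_of_lt _ _ hto, eval_glue_of_lt f g hato, hoa]
        congr 1
        field_simp
      · have hato : o.1 ≤ a.1 * t := by rw [hoa, not_lt, div_le_iff₀ ha₀] at hto; linarith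
        rw [eval_glue_of_le _ _ (not_lt.1 hto),
          ihg _ (sub_div_mem_Ico_zero_one _ ht (not_lt.1 hto)), eval_glue_of_le f g hato, hoa]
        congr 1
        simp only [subO]
        have : a.1 - o.1 ≠ 0 := by linarith
        have : 1 - o.1 ≠ 0 := by linarith
        field_simp

lemma eval_splitR (x : S X) (a : OO) {t : ℚ} (ht : t ∈ Ico (0 : ℚ) 1) :
    eval (splitR x a) t = eval x (a.1 + (1 - a.1) * t) := by
  induction x generalizing a t with
  | const x => rfl
  | glue o f g ihf ihg =>
    obtain ⟨ha₀, ha₁⟩ := a.2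
    obtain ⟨ho₀, ho₁⟩ := o.2
    have hat : a.1 ≤ a.1 + (1 - a.1) * t := by nlinarith [ht.1]
    have ha : 1 - a.1 ≠ 0 := by linarith
    have ho : 1 - o.1 ≠ 0 := by linarith
    rcases lt_trichotomy a.1 o.1 with h | h | h
    · rw [splitR, dif_pos h]
      have hoa : (subO o a h).1 = (o.1 - a.1) / (1 - a.1) := rfl
      have hoa' : o.1 - a.1 ≠ 0 := by linarith
      by_cases hto : t < (subO o a h).1
      · have hato : a.1 + (1 - a.1) * t < o.1 := by
          rw [hoa, lt_div_iff₀ (by linarith)] at hto; linarith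
        rw [eval_glue_of_lt _ _ hto, ihf _ (div_mem_Ico_zero_one _ ht hto),
          eval_glue_of_lt f g hato, hoa]
        congr 1
        simp only [divO]
        field_simp
      · have hato : o.1 ≤ a.1 + (1 - a.1) * t := by
          rw [hoa, not_lt, div_le_iff₀ (by linarith)] at hto; linarith
        have hs : 1 - (o.1 - a.1) / (1 - a.1) = (1 - o.1) / (1 - a.1) := by field_simp; ring
        rw [eval_glue_of_le _ _ (not_lt.1 hto), eval_glue_of_le f g hato, hoa, hs]
        congr 1
        field_simp
        ring
    · rw [splitR, dif_neg h.not_lt, dif_neg h.not_gt, h, eval_glue_add_mul o f g ht]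
    · rw [splitR, dif_neg (asymm h), dif_pos h, ihg _ ht, eval_glue_of_le f g (h.le.trans hat)]
      congr 1
      simp only [subO]
      field_simp
      ring

lemma eval_ap (F : S (X → Y)) (x : S X) {t : ℚ} (ht : t ∈ Ico (0 : ℚ) 1) :
    eval (ap F x) t = eval F t (eval x t) := by
  induction F generalizing x t with
  | const k => exact eval_mapS k x t
  | glue o Fl Fr ihl ihr =>
    have ho : 1 - o.1 ≠ 0 := sub_ne_zero.2 o.2.2.ne'
    by_cases hto : t < o.1
    · rw [ap, eval_glue_of_lt _ _ hto, eval_glue_of_lt _ _ hto,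
        ihl _ (div_mem_Ico_zero_one o ht hto), eval_splitL _ _ (div_mem_Ico_zero_one o ht hto),
        mul_div_cancel₀ _ o.2.1.ne']
    · rw [not_lt] at hto
      rw [ap, eval_glue_of_le _ _ hto, eval_glue_of_le _ _ hto,
        ihr _ (sub_div_mem_Ico_zero_one o ht hto),
        eval_splitR _ _ (sub_div_mem_Ico_zero_one o ht hto), mul_div_cancel₀ _ ho,
        add_sub_cancel]

lemma eval_map2 {Z : Type} (k : X → Y → Z) (f : S X) (g : S Y) {t : ℚ}
    (ht : t ∈ Ico (0 : ℚ) 1) : eval (map2 k f g) t = k (eval f t) (eval g t) := by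
  rw [map2, eval_ap _ _ ht, eval_mapS]

lemma foldAffine_const (c : ℚ) : foldAffine (const c) = c := rfl

lemma foldAffine_glue (o : OO) (f g : S ℚ) :
    foldAffine (glue o f g) = o.1 * foldAffine f + (1 - o.1) * foldAffine g := rfl

lemma foldAffine_eq_splitL_add_splitR (x : S ℚ) (a : OO) :
    foldAffine x = a.1 * foldAffine (splitL x a) + (1 - a.1) * foldAffine (splitR x a) := by
  induction x generalizing a with
  | const c => simp only [splitL, splitR, foldAffine_const]; ring
  | glue o f g ihf ihg =>
    obtain ⟨ha₀, ha₁⟩ := a.2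
    obtain ⟨ho₀, ho₁⟩ := o.2
    have ha : 1 - a.1 ≠ 0 := by linarith
    have ho : 1 - o.1 ≠ 0 := by linarith
    rcases lt_trichotomy a.1 o.1 with h | h | h
    · rw [splitL, dif_pos h, splitR, dif_pos h, foldAffine_glue, foldAffine_glue,
        ihf (divO a o h)]
      simp only [divO, subO]
      field_simp
      ring
    · rw [splitL, dif_neg h.not_lt, dif_neg h.not_gt, splitR, dif_neg h.not_lt, dif_neg h.not_gt,
        foldAffine_glue, h]
    · rw [splitL, dif_neg (asymm h), dif_pos h, splitR, dif_neg (asymm h), dif_pos h,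
        foldAffine_glue, foldAffine_glue, ihg (subO a o h)]
      simp only [divO, subO]
      field_simp
      ring

lemma le_foldAffine_of_forall_le {c : ℚ} {v : S ℚ} (h : ∀ t ∈ Ico (0 : ℚ) 1, c ≤ eval v t) :
    c ≤ foldAffine v := by
  induction v with
  | const d => exact h 0 ⟨le_rfl, one_pos⟩
  | glue o f g ihf ihg =>
    have hf := ihf fun s hs => eval_glue_mul o f g hs ▸ h _ (mul_mem_Ico_zero_one o hs)
    have hg := ihg fun s hs => eval_glue_add_mul o f g hs ▸ h _ (add_mul_mem_Ico_zero_one o hs)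
    rw [foldAffine_glue]
    nlinarith [o.2.1, o.2.2]

lemma foldAffine_mono {u v : S ℚ} (h : ∀ t ∈ Ico (0 : ℚ) 1, eval u t ≤ eval v t) :
    foldAffine u ≤ foldAffine v := by
  induction u generalizing v with
  | const c => exact le_foldAffine_of_forall_le h
  | glue o f g ihf ihg =>
    have hf := ihf (v := splitL v o) fun s hs => by
      rw [eval_splitL v o hs, ← eval_glue_mul o f g hs]
      exact h _ (mul_mem_Ico_zero_one o hs)
    have hg := ihg (v := splitR v o) fun s hs => by
      rw [eval_splitR v o hs, ← eval_glue_add_mul o f g hs]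
      exact h _ (add_mul_mem_Ico_zero_one o hs)
    rw [foldAffine_glue, foldAffine_eq_splitL_add_splitR v o]
    nlinarith [o.2.1, o.2.2]

lemma foldAffine_congr {u v : S ℚ} (h : ∀ t ∈ Ico (0 : ℚ) 1, eval u t = eval v t) :
    foldAffine u = foldAffine v :=
  (foldAffine_mono fun t ht => (h t ht).le).antisymm (foldAffine_mono fun t ht => (h t ht).ge)

lemma foldAffine_mapS_const_add (c : ℚ) (v : S ℚ) :
    foldAffine (mapS (c + ·) v) = c + foldAffine v := by
  induction v with
  | const d => rfl
  | glue o f g ihf ihg =>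
    rw [mapS, foldAffine_glue, foldAffine_glue, ihf, ihg]
    ring

lemma foldAffine_map2_add (u v : S ℚ) :
    foldAffine (map2 (· + ·) u v) = foldAffine u + foldAffine v := by
  induction u generalizing v with
  | const c => exact foldAffine_mapS_const_add c v
  | glue o f g ihf ihg =>
    change foldAffine (glue o (map2 _ f (splitL v o)) (map2 _ g (splitR v o))) = _
    rw [foldAffine_glue, foldAffine_glue, ihf, ihg, foldAffine_eq_splitL_add_splitR v o]
    ring

lemma eval_eq_zero_of_foldAffine_eq_zero {u : S ℚ} (hu : ∀ t ∈ Ico (0 : ℚ) 1, 0 ≤ eval u t)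
    (h : foldAffine u = 0) : ∀ t ∈ Ico (0 : ℚ) 1, eval u t = 0 := by
  induction u with
  | const c => exact fun _ _ => h
  | glue o f g ihf ihg =>
    have hf : ∀ s ∈ Ico (0 : ℚ) 1, 0 ≤ eval f s := fun s hs =>
      eval_glue_mul o f g hs ▸ hu _ (mul_mem_Ico_zero_one o hs)
    have hg : ∀ s ∈ Ico (0 : ℚ) 1, 0 ≤ eval g s := fun s hs =>
      eval_glue_add_mul o f g hs ▸ hu _ (add_mul_mem_Ico_zero_one o hs)
    have hf₀ := le_foldAffine_of_forall_le hf
    have hg₀ := le_foldAffine_of_forall_le hg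
    rw [foldAffine_glue] at h
    have hf' : foldAffine f = 0 := by nlinarith [o.2.1, o.2.2]
    have hg' : foldAffine g = 0 := by nlinarith [o.2.1, o.2.2]
    intro t ht
    by_cases hto : t < o.1
    · rw [eval_glue_of_lt f g hto]
      exact ihf hf hf' _ (div_mem_Ico_zero_one o ht hto)
    · rw [eval_glue_of_le f g (not_lt.1 hto)]
      exact ihg hg hg' _ (sub_div_mem_Ico_zero_one o ht (not_lt.1 hto))

lemma foldStar_iff_forall_eval (P : S Prop) : foldStar P ↔ ∀ t ∈ Ico (0 : ℚ) 1, eval P t := by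
  induction P with
  | const p => exact ⟨fun hp _ _ => hp, fun h => h 0 ⟨le_rfl, one_pos⟩⟩
  | glue o f g ihf ihg =>
    change foldStar f ∧ foldStar g ↔ _
    rw [ihf, ihg]
    constructor
    · rintro ⟨hf, hg⟩ t ht
      by_cases hto : t < o.1
      · rw [eval_glue_of_lt f g hto]
        exact hf _ (div_mem_Ico_zero_one o ht hto)
      · rw [eval_glue_of_le f g (not_lt.1 hto)]
        exact hg _ (sub_div_mem_Ico_zero_one o ht (not_lt.1 hto))
    · intro h
      exact ⟨fun s hs => eval_glue_mul o f g hs ▸ h _ (mul_mem_Ico_zero_one o hs),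
        fun s hs => eval_glue_add_mul o f g hs ▸ h _ (add_mul_mem_Ico_zero_one o hs)⟩

lemma dOne_eq_foldAffine (f g : S ℚ) : dOne f g = foldAffine (map2 (fun x y => |x - y|) f g) :=
  foldAffine_congr fun t ht => by rw [eval_mapS, eval_map2 _ _ _ ht, eval_map2 _ _ _ ht]

end S

/-- The L¹ metric `d¹` on rational step functions satisfies the metric axioms
with respect to the lifted equality. -/
theorem dOne_is_metric (f g h : S ℚ) :
    0 ≤ dOne f g ∧
    dOne f f = 0 ∧
    dOne f g = dOne g f ∧
    dOne f h ≤ dOne f g + dOne g h ∧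
    (dOne f g = 0 → equivS f g) := by
  simp only [dOne_eq_foldAffine]
  refine ⟨?_, ?_, ?_, ?_, ?_⟩
  · refine le_foldAffine_of_forall_le fun t ht => ?_
    rw [eval_map2 _ _ _ ht]
    exact abs_nonneg _
  · refine foldAffine_congr (v := const 0) fun t ht => ?_
    rw [eval_map2 _ _ _ ht, sub_self, abs_zero]
    rfl
  · refine foldAffine_congr fun t ht => ?_
    rw [eval_map2 _ _ _ ht, eval_map2 _ _ _ ht]
    exact abs_sub_comm _ _
  · rw [← foldAffine_map2_add]
    refine foldAffine_mono fun t ht => ?_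
    rw [eval_map2 _ _ _ ht, eval_map2 _ _ _ ht, eval_map2 _ _ _ ht, eval_map2 _ _ _ ht]
    exact abs_sub_le _ _ _
  · intro h₀
    have hzero := eval_eq_zero_of_foldAffine_eq_zero (fun t ht => by
      rw [eval_map2 _ _ _ ht]; exact abs_nonneg _) h₀
    rw [equivS, liftRel, foldStar_iff_forall_eval]
    intro t ht
    have := hzero t ht
    rwa [eval_map2 _ _ _ ht, abs_eq_zero, sub_eq_zero, ← eval_map2 Eq f g ht] at this
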